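/- arXiv:1909.13415 — 3 statements merged into one kernel-verified Lean document; each statement's English description precedes it below -/
import Mathlib

section
/- For every real p ≥ 2, 1/(p − 1) < √π · Γ(p/2 − 1/2) / (2 · Γ(p/2)). -/
/-!
Put `x = (p - 1) / 2 ≥ 1/2`, so the claim reads `Γ(x + 1/2) < √π · x · Γ(x)`. Log-convexity of `Γ`
at the midpoint of `x` and `x + 1` gives `Γ(x + 1/2) ≤ √(Γ(x) Γ(x + 1)) = √x · Γ(x)`, and
`√x < √π · x` as soon as `π x > 1`.
-/

open Real

theorem Real.Gamma_add_half_le_sqrt_mul_Gamma {x : ℝ} (hx : 0 < x) :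
    Gamma (x + 1 / 2) ≤ √x * Gamma x := by
  have hconv := Gamma_mul_add_mul_le_rpow_Gamma_mul_rpow_Gamma hx (by linarith : 0 < x + 1)
    one_half_pos one_half_pos (add_halves 1)
  have hΓ : 0 ≤ Gamma x := (Gamma_pos_of_pos hx).le
  calc Gamma (x + 1 / 2) = Gamma (1 / 2 * x + 1 / 2 * (x + 1)) := by ring_nf
    _ ≤ Gamma x ^ (1 / 2 : ℝ) * Gamma (x + 1) ^ (1 / 2 : ℝ) := hconv
    _ = √(x * Gamma x ^ 2) := by
      rw [Gamma_add_one hx.ne', ← mul_rpow hΓ (mul_nonneg hx.le hΓ), ← sqrt_eq_rpow]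
      ring_nf
    _ = √x * Gamma x := by rw [sqrt_mul hx.le, sqrt_sq hΓ]

theorem Real.Gamma_add_half_lt_sqrt_pi_mul_Gamma {x : ℝ} (hx : 1 / π < x) :
    Gamma (x + 1 / 2) < √π * x * Gamma x := by
  have hx₀ : 0 < x := lt_trans (by positivity) hx
  have hπx : 1 < π * x := by rwa [div_lt_iff₀' pi_pos] at hx
  have hsqrt : √x < √π * x := by
    rw [sqrt_lt' (by positivity), mul_pow, sq_sqrt pi_pos.le]
    nlinarith
  calc Gamma (x + 1 / 2) ≤ √x * Gamma x := Gamma_add_half_le_sqrt_mul_Gamma hx₀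
    _ < √π * x * Gamma x := mul_lt_mul_of_pos_right hsqrt (Gamma_pos_of_pos hx₀)

theorem stmt_1 (p : ℝ) (hp : 2 ≤ p) :
    1 / (p - 1) < Real.sqrt Real.pi * Real.Gamma (p / 2 - 1 / 2) / (2 * Real.Gamma (p / 2)) := by
  set x := p / 2 - 1 / 2 with hx
  have hπx : 1 / π < x := by
    have : 1 / π < 1 / 2 := by gcongr; linarith [pi_gt_three]
    linarith
  have hx₀ : 0 < x := lt_trans (by positivity) hπx
  have key := Gamma_add_half_lt_sqrt_pi_mul_Gamma hπx
  rw [show p / 2 = x + 1 / 2 by ring, show p - 1 = 2 * x by ring,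
    div_lt_div_iff₀ (by positivity) (mul_pos two_pos (Gamma_pos_of_pos (by linarith)))]
  linarith
end

section
/- Let r₀ > 0, z₀ ∈ ℂ, and z ∈ ℂ with |z − z₀| < r₀. Then the contour integral of |dt/(t − z)| over the circle |t − z₀| = r₀ equals 4·r₀·K(k)/(|z − z₀| + r₀), where k = 2√(r₀·|z − z₀|)/(|z − z₀| + r₀) and K(k) = ∫₀^{π/2} dτ/√(1 − k² sin²τ) is the complete elliptic integral of the first kind. -/
/-- Complete elliptic integral of the first kind. -/
noncomputable def ellipticK (k : ℝ) : ℝ :=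
  ∫ τ in (0:ℝ)..(Real.pi / 2), 1 / Real.sqrt (1 - k ^ 2 * Real.sin τ ^ 2)

lemma absA (r₀ : ℝ) (w : ℂ) (φ : ℝ) :
    ‖(r₀:ℂ) * Complex.exp (φ * Complex.I) - w‖ =
    Real.sqrt (r₀^2 + (‖w‖)^2 - 2*r₀*(‖w‖)*Real.cos (φ - w.arg)) := by
  rw [← Real.sqrt_sq (norm_nonneg _)]
  congr 1
  rw [Complex.sq_norm]
  conv_lhs => rw [← Complex.norm_mul_cos_add_sin_mul_I w]
  simp only [Complex.normSq_apply, Complex.exp_mul_I, Complex.sub_re, Complex.sub_im,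
    Complex.mul_re, Complex.mul_im, Complex.add_re, Complex.add_im, Complex.ofReal_re,
    Complex.ofReal_im, Complex.cos_ofReal_re, Complex.cos_ofReal_im, Complex.sin_ofReal_re,
    Complex.sin_ofReal_im, Complex.I_re, Complex.I_im, Real.cos_sub]
  nlinarith [Real.sin_sq_add_cos_sq φ, Real.sin_sq_add_cos_sq w.arg]

lemma sqrtA (r₀ a : ℝ) (hr : 0 < r₀) (ha : 0 ≤ a) (x : ℝ) :
    Real.sqrt (r₀^2 + a^2 - 2*r₀*a*Real.cos x) =
    (a + r₀) * Real.sqrt (1 - (2 * Real.sqrt (r₀*a) / (a+r₀))^2 * Real.cos (x/2)^2) := by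
  have hc : (0:ℝ) < a + r₀ := by linarith
  have hk2 : (2 * Real.sqrt (r₀*a) / (a+r₀))^2 = 4*r₀*a/(a+r₀)^2 := by
    rw [div_pow, mul_pow, Real.sq_sqrt (by positivity)]; ring
  have hcos : Real.cos (x/2)^2 = (1 + Real.cos x)/2 := by
    have := Real.cos_sq (x/2)
    rw [mul_div_cancel₀ x (two_ne_zero)] at this
    linarith
  rw [hk2, hcos,
    show (1 - 4*r₀*a/(a+r₀)^2 * ((1 + Real.cos x)/2)) =
      (r₀^2 + a^2 - 2*r₀*a*Real.cos x) / (a+r₀)^2 by field_simp; ring,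
    Real.sqrt_div' _ (by positivity), Real.sqrt_sq hc.le]
  field_simp

lemma contA {k : ℝ} (hk : k^2 < 1) :
    Continuous (fun τ : ℝ => 1 / Real.sqrt (1 - k^2 * Real.cos τ^2)) := by
  have hpos : ∀ τ : ℝ, 0 < 1 - k^2 * Real.cos τ^2 := by
    intro τ
    nlinarith [Real.cos_sq_le_one τ, sq_nonneg (Real.cos τ), sq_nonneg k,
      sq_nonneg (k * Real.cos τ)]
  exact continuous_const.div
    (Real.continuous_sqrt.comp (by continuity))
    (fun τ => (Real.sqrt_pos.2 (hpos τ)).ne')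

lemma intA {k : ℝ} (hk : k^2 < 1) :
    ∫ x in (0:ℝ)..(2*Real.pi), 1 / Real.sqrt (1 - k^2 * Real.cos (x/2)^2) =
    4 * ∫ τ in (0:ℝ)..(Real.pi/2), 1 / Real.sqrt (1 - k^2 * Real.sin τ^2) := by
  have hcont := contA hk
  rw [intervalIntegral.integral_comp_div (c := 2)
    (f := fun τ => 1 / Real.sqrt (1 - k^2 * Real.cos τ^2)) two_ne_zero,
    show (0:ℝ)/2 = 0 by norm_num, show 2*Real.pi/2 = Real.pi by ring, smul_eq_mul]
  have h1 : ∫ x in (0:ℝ)..Real.pi, 1 / Real.sqrt (1 - k^2 * Real.cos x^2) =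
      (∫ x in (0:ℝ)..(Real.pi/2), 1 / Real.sqrt (1 - k^2 * Real.cos x^2)) +
      ∫ x in (Real.pi/2)..Real.pi, 1 / Real.sqrt (1 - k^2 * Real.cos x^2) :=
    (intervalIntegral.integral_add_adjacent_intervals
      (hcont.intervalIntegrable _ _) (hcont.intervalIntegrable _ _)).symm
  have h2 := intervalIntegral.integral_comp_sub_left (a := 0) (b := Real.pi/2)
      (fun x => 1 / Real.sqrt (1 - k^2 * Real.cos x^2)) Real.pi
  simp only [Real.cos_pi_sub, neg_sq, sub_zero] at h2
  rw [show Real.pi - Real.pi/2 = Real.pi/2 by ring] at h2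
  have h3 := intervalIntegral.integral_comp_sub_left (a := 0) (b := Real.pi/2)
      (fun x => 1 / Real.sqrt (1 - k^2 * Real.cos x^2)) (Real.pi/2)
  simp only [Real.cos_pi_div_two_sub, sub_zero, sub_self] at h3
  rw [h1, ← h2, ← h3]; ring

theorem stmt_6 (r₀ : ℝ) (hr₀ : 0 < r₀) (z₀ z : ℂ) (hz : ‖z - z₀‖ < r₀) :
    ∫ φ in (0:ℝ)..(2 * Real.pi),
        r₀ / ‖z₀ + (r₀ : ℂ) * Complex.exp (φ * Complex.I) - z‖ =
      4 * r₀ * ellipticK (2 * Real.sqrt (r₀ * ‖z - z₀‖) /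
        (‖z - z₀‖ + r₀)) / (‖z - z₀‖ + r₀) := by
  set a : ℝ := ‖z - z₀‖ with ha_def
  have ha : 0 ≤ a := norm_nonneg _
  have hc : (0:ℝ) < a + r₀ := by linarith
  set θ : ℝ := (z - z₀).arg with hθ_def
  set k : ℝ := 2 * Real.sqrt (r₀ * a) / (a + r₀) with hk_def
  have hk2 : k^2 = 4*r₀*a/(a+r₀)^2 := by
    rw [hk_def, div_pow, mul_pow, Real.sq_sqrt (by positivity)]; ring
  have hklt : k^2 < 1 := by
    rw [hk2, div_lt_one (by positivity)]
    nlinarith [sq_nonneg (r₀ - a)]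
  -- Step 1: rewrite the integrand
  have key : ∀ φ : ℝ, r₀ / ‖z₀ + (r₀:ℂ) * Complex.exp (φ * Complex.I) - z‖ =
      r₀ / Real.sqrt (r₀^2 + a^2 - 2*r₀*a*Real.cos (φ - θ)) := by
    intro φ
    rw [show z₀ + (r₀:ℂ) * Complex.exp (φ * Complex.I) - z
        = (r₀:ℂ) * Complex.exp (φ * Complex.I) - (z - z₀) by ring, absA]
  simp only [key]
  -- Step 2: shift by θ using periodicity
  have hper : Function.Periodic
      (fun x : ℝ => r₀ / Real.sqrt (r₀^2 + a^2 - 2*r₀*a*Real.cos x)) (2*Real.pi) := by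
    intro x; simp [Real.cos_add_two_pi]
  rw [intervalIntegral.integral_comp_sub_right
      (fun x => r₀ / Real.sqrt (r₀^2 + a^2 - 2*r₀*a*Real.cos x)) θ,
    show (0:ℝ) - θ = -θ by ring, show 2*Real.pi - θ = -θ + 2*Real.pi by ring,
    hper.intervalIntegral_add_eq (-θ) 0, zero_add]
  -- Step 3: rewrite the square root
  have key2 : ∀ x : ℝ, r₀ / Real.sqrt (r₀^2 + a^2 - 2*r₀*a*Real.cos x)
      = (r₀ / (a + r₀)) * (1 / Real.sqrt (1 - k^2 * Real.cos (x/2)^2)) := by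
    intro x
    rw [sqrtA r₀ a hr₀ ha x, ← hk_def, mul_one_div, div_div]
  simp only [key2]
  rw [intervalIntegral.integral_const_mul, intA hklt]
  rw [ellipticK]
  field_simp
end

section
/- Let F̂₁(z) = z²(z²+4)/(8(z²−1)³) (the Bessel case). Then F̂₁ has a pole of order 3 at z = 1, and (1−z²)^{3/2} · Ê₁(z) extends analytically across z = 1, where Ê₁(z) = ∫_z^∞ t^{−1}(1 − t²)^{1/2} F̂₁(t) dt (with the constant chosen so the integral converges); equivalently Ê₁ has the form P₁(z²)/(1−z²)^{3/2} for a polynomial P₁ of degree 1. -/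
/-- The first coefficient `F̂₁` for the Bessel case (real version). -/
noncomputable def F1Bessel (z : ℝ) : ℝ := z ^ 2 * (z ^ 2 + 4) / (8 * (z ^ 2 - 1) ^ 3)

theorem stmt_15 :
    -- F̂₁ has a pole of order 3 at z = 1
    (∃ h : ℂ → ℂ, AnalyticAt ℂ h 1 ∧ h 1 ≠ 0 ∧
      ∀ z : ℂ, z ≠ 1 → z ≠ -1 →
        z ^ 2 * (z ^ 2 + 4) / (8 * (z ^ 2 - 1) ^ 3) = h z / (z - 1) ^ 3) ∧
    -- Ê₁(z) = P₁(z²)/(1−z²)^{3/2} with P₁ of degree 1, and Ê₁ is an antiderivative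
    -- (in the decreasing-z direction) of the integrand t⁻¹(1−t²)^{1/2}F̂₁(t),
    -- i.e. Ê₁'(z) = −z⁻¹(1−z²)^{1/2}F̂₁(z) on (0,1)
    (∃ p₀ p₁ : ℝ, p₁ ≠ 0 ∧ ∀ z ∈ Set.Ioo (0:ℝ) 1,
      HasDerivAt (fun z : ℝ => (p₀ + p₁ * z ^ 2) / (1 - z ^ 2) ^ ((3:ℝ)/2))
        (-(Real.sqrt (1 - z ^ 2) / z) * F1Bessel z) z) := by
  constructor
  · refine ⟨fun z => z ^ 2 * (z ^ 2 + 4) / (8 * (z + 1) ^ 3), ?_, ?_, ?_⟩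
    · apply AnalyticAt.div
      · exact ((analyticAt_id.pow 2).mul ((analyticAt_id.pow 2).add analyticAt_const))
      · exact (analyticAt_const.mul ((analyticAt_id.add analyticAt_const).pow 3))
      · norm_num
    · norm_num
    · intro z hz1 hz2
      have h1 : z - 1 ≠ 0 := sub_ne_zero.mpr hz1
      have h2 : z + 1 ≠ 0 := fun h => hz2 (by linear_combination h)
      have h3 : (8:ℂ) * (z ^ 2 - 1) ^ 3 ≠ 0 := by
        apply mul_ne_zero (by norm_num)
        apply pow_ne_zero
        have : z ^ 2 - 1 = (z - 1) * (z + 1) := by ring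
        rw [this]; exact mul_ne_zero h1 h2
      rw [div_eq_div_iff h3 (pow_ne_zero 3 h1)]
      field_simp
      ring
  · refine ⟨1/12, 1/8, by norm_num, ?_⟩
    rintro z ⟨hz0, hz1⟩
    have hu : (0:ℝ) < 1 - z ^ 2 := by nlinarith
    have hs : Real.sqrt (1 - z ^ 2) > 0 := Real.sqrt_pos.mpr hu
    have hs2 : Real.sqrt (1 - z ^ 2) ^ 2 = 1 - z ^ 2 := Real.sq_sqrt hu.le
    have hd1 : HasDerivAt (fun z : ℝ => (1/12 : ℝ) + 1/8 * z ^ 2) (1/8 * (2 * z)) z := by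
      simpa using (((hasDerivAt_pow 2 z).const_mul (1/8:ℝ)).const_add (1/12:ℝ))
    have hneg : HasDerivAt (fun z : ℝ => 1 - z ^ 2) (-(2*z)) z := by
      simpa using (hasDerivAt_pow 2 z).const_sub 1
    have hd2 : HasDerivAt (fun z : ℝ => (1 - z ^ 2) ^ ((3:ℝ)/2))
        (-(2*z) * ((3:ℝ)/2) * (1 - z ^ 2) ^ ((3:ℝ)/2 - 1)) z :=
      hneg.rpow_const (Or.inl hu.ne')
    have hden : (1 - z ^ 2) ^ ((3:ℝ)/2) ≠ 0 := by positivity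
    have hD := hd1.div hd2 hden
    refine hD.congr_deriv ?_
    have e1 : (1 - z ^ 2) ^ ((3:ℝ)/2) = Real.sqrt (1 - z ^ 2) ^ 3 := by
      rw [Real.sqrt_eq_rpow, ← Real.rpow_natCast ((1 - z^2) ^ ((1:ℝ)/2)) 3,
        ← Real.rpow_mul hu.le]
      norm_num
    have e2 : (1 - z ^ 2) ^ ((3:ℝ)/2 - 1) = Real.sqrt (1 - z ^ 2) := by
      rw [Real.sqrt_eq_rpow]; norm_num
    have e3 : (z ^ 2 - 1) ^ 3 = -(Real.sqrt (1 - z ^ 2) ^ 2) ^ 3 := by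
      rw [hs2]; ring
    rw [e1, e2, F1Bessel, e3]
    have hz0' : z ≠ 0 := hz0.ne'
    have hs' : Real.sqrt (1 - z ^ 2) ≠ 0 := hs.ne'
    field_simp
    linear_combination (1536*z^2*(4+z^2)*Real.sqrt (1-z^2)*
        (Real.sqrt (1-z^2)^4 + Real.sqrt (1-z^2)^2*(1-z^2) + (1-z^2)^2)
      - Real.sqrt (1-z^2)*(3072*z^2-9216*z^4+9216*z^6-3072*z^8)
      + (24 + Real.sqrt (1-z^2)^5*(-6144*z^2-1536*z^4) + Real.sqrt (1-z^2)^3*(-6144*z^2+4608*z^4+1536*z^6)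
        + Real.sqrt (1-z^2)*(-3072*z^2+1536*z^4+6144*z^6-4608*z^8))) * hs2
end
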